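/- If G is a finite simple graph without isolated vertices, then γ_Lg(G) ≤ γ_LLg(G). -/

import Mathlib

/- Formalization of the domination games from "The variety of domination games".

A game is specified by a legality predicate `legal : List V → V → Prop`, where the list
records the previously played vertices (most recent first).  Players alternate moves;
each move must be legal; the game ends when no legal move exists.  Dominator wants to
minimize, Staller to maximize, the total number of moves.

`canEnd legal k turn h` states that, with history `h` and the player to move given by
`turn` (`true` = Dominator), Dominator can guarantee that at most `k` further moves are
played (against any play of Staller).  The value of the game under optimal play by both
players is then the least such `k` from the empty history. -/

/-- The closed neighborhood `N[v]` of a vertex. -/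
def closedNbhd {V : Type*} (G : SimpleGraph V) (v : V) : Set V :=
  insert v (G.neighborSet v)

/-- `⋃_{u ∈ h} N[u]` : the set of vertices dominated by the moves in `h`. -/
def dominatedBy {V : Type*} (G : SimpleGraph V) (h : List V) : Set V :=
  ⋃ u ∈ h, closedNbhd G u

/-- `⋃_{u ∈ h} N(u)` : the set of vertices totally dominated by the moves in `h`. -/
def totDominatedBy {V : Type*} (G : SimpleGraph V) (h : List V) : Set V :=
  ⋃ u ∈ h, G.neighborSet u

/-- Legality in the domination game: `N[v] \ ⋃_{j<i} N[v_j] ≠ ∅`. -/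
def dgLegal {V : Type*} (G : SimpleGraph V) (h : List V) (v : V) : Prop :=
  (closedNbhd G v \ dominatedBy G h).Nonempty

/-- Legality in the total domination game: `N(v) \ ⋃_{j<i} N(v_j) ≠ ∅`. -/
def tgLegal {V : Type*} (G : SimpleGraph V) (h : List V) (v : V) : Prop :=
  (G.neighborSet v \ totDominatedBy G h).Nonempty

/-- Legality in the Z-domination game on `G|A`: `N(v) \ (A ∪ ⋃_{j<i} N[v_j]) ≠ ∅`. -/
def zLegal {V : Type*} (G : SimpleGraph V) (A : Set V) (h : List V) (v : V) : Prop :=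
  (G.neighborSet v \ (A ∪ dominatedBy G h)).Nonempty

/-- Legality in the LL-domination game on `G|A`: `N[v] \ (A ∪ ⋃_{j<i} N(v_j)) ≠ ∅`. -/
def llLegal {V : Type*} (G : SimpleGraph V) (A : Set V) (h : List V) (v : V) : Prop :=
  (closedNbhd G v \ (A ∪ totDominatedBy G h)).Nonempty

/-- Legality in the L-domination game on `G|A`: as in the LL-game, and moreover no vertex
may be played twice. -/
def lLegal {V : Type*} (G : SimpleGraph V) (A : Set V) (h : List V) (v : V) : Prop :=
  llLegal G A h v ∧ v ∉ h

/-- `canEnd legal k turn h` : with previously played vertices `h` and the player to move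
given by `turn` (`true` = Dominator, `false` = Staller), Dominator has a strategy
guaranteeing that at most `k` further moves are made. -/
def canEnd {V : Type*} (legal : List V → V → Prop) : ℕ → Bool → List V → Prop
  | 0, _, h => ∀ v, ¬ legal h v
  | k+1, true, h => (∀ v, ¬ legal h v) ∨ ∃ v, legal h v ∧ canEnd legal k false (v :: h)
  | k+1, false, h => ∀ v, legal h v → canEnd legal k true (v :: h)

/-- The number of moves in the game with legality predicate `legal` when both players play
optimally (Dominator minimizing, Staller maximizing the number of moves); `dFirst = true`
means Dominator makes the first move. -/
noncomputable def gameVal {V : Type*} (legal : List V → V → Prop) (dFirst : Bool) : ℕ :=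
  sInf {k | canEnd legal k dFirst []}

/-- The game Z-domination number `γ_Zg(G|A)` (Dominator starts). -/
noncomputable def gammaZgA {V : Type*} (G : SimpleGraph V) (A : Set V) : ℕ :=
  gameVal (zLegal G A) true

/-- The Staller-start game Z-domination number `γ'_Zg(G|A)`. -/
noncomputable def gammaZgA' {V : Type*} (G : SimpleGraph V) (A : Set V) : ℕ :=
  gameVal (zLegal G A) false

/-- The game L-domination number `γ_Lg(G|A)` (Dominator starts). -/
noncomputable def gammaLgA {V : Type*} (G : SimpleGraph V) (A : Set V) : ℕ :=
  gameVal (lLegal G A) true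

/-- The Staller-start game L-domination number `γ'_Lg(G|A)`. -/
noncomputable def gammaLgA' {V : Type*} (G : SimpleGraph V) (A : Set V) : ℕ :=
  gameVal (lLegal G A) false

/-- The game LL-domination number `γ_LLg(G|A)` (Dominator starts). -/
noncomputable def gammaLLgA {V : Type*} (G : SimpleGraph V) (A : Set V) : ℕ :=
  gameVal (llLegal G A) true

/-- The Staller-start game LL-domination number `γ'_LLg(G|A)`. -/
noncomputable def gammaLLgA' {V : Type*} (G : SimpleGraph V) (A : Set V) : ℕ :=
  gameVal (llLegal G A) false

/-- The game domination number `γ_g(G)` (Dominator starts). -/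
noncomputable def gammaG {V : Type*} (G : SimpleGraph V) : ℕ :=
  gameVal (dgLegal G) true

/-- The game total domination number `γ_tg(G)` (Dominator starts). -/
noncomputable def gammaTg {V : Type*} (G : SimpleGraph V) : ℕ :=
  gameVal (tgLegal G) true

/-- The game Z-domination number `γ_Zg(G)` (Dominator starts). -/
noncomputable def gammaZg {V : Type*} (G : SimpleGraph V) : ℕ := gammaZgA G ∅

/-- The Staller-start game Z-domination number `γ'_Zg(G)`. -/
noncomputable def gammaZg' {V : Type*} (G : SimpleGraph V) : ℕ := gammaZgA' G ∅

/-- The game L-domination number `γ_Lg(G)` (Dominator starts). -/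
noncomputable def gammaLg {V : Type*} (G : SimpleGraph V) : ℕ := gammaLgA G ∅

/-- The Staller-start game L-domination number `γ'_Lg(G)`. -/
noncomputable def gammaLg' {V : Type*} (G : SimpleGraph V) : ℕ := gammaLgA' G ∅

/-- The game LL-domination number `γ_LLg(G)` (Dominator starts). -/
noncomputable def gammaLLg {V : Type*} (G : SimpleGraph V) : ℕ := gammaLLgA G ∅

/-- The Staller-start game LL-domination number `γ'_LLg(G)`. -/
noncomputable def gammaLLg' {V : Type*} (G : SimpleGraph V) : ℕ := gammaLLgA' G ∅

/-- `G` has no isolated vertices. -/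
def isolateFree {V : Type*} (G : SimpleGraph V) : Prop := ∀ v : V, ∃ u, G.Adj v u

/-- The domination number `γ(G)`. -/
noncomputable def domNum {V : Type*} (G : SimpleGraph V) : ℕ :=
  sInf {k | ∃ S : Finset V, S.card = k ∧ ∀ v : V, ∃ u ∈ S, v ∈ closedNbhd G u}

/-- The total domination number `γ_t(G)`. -/
noncomputable def totDomNum {V : Type*} (G : SimpleGraph V) : ℕ :=
  sInf {k | ∃ S : Finset V, S.card = k ∧ ∀ v : V, ∃ u ∈ S, G.Adj u v}

/-! Dominator plays the L-game while following an optimal strategy for an imagined LL-game,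
keeping the invariant that every vertex covered (in `A` or totally dominated) in the imagined
game is covered in the real one. When the imagined move `v` is illegal in the L-game, either `v`
was already played or `N[v]` is already covered; either way `N(v)` is, so any legal move keeps
the invariant. The LL-game is finite because Dominator can cover a new vertex with each of his
moves by playing a neighbour of it; this is where isolated vertices, which could be replayed
forever, are excluded. -/

section

variable {V : Type*} (G : SimpleGraph V) (A : Set V)

theorem totDominatedBy_cons (v : V) (h : List V) :
    totDominatedBy G (v :: h) = G.neighborSet v ∪ totDominatedBy G h := by
  ext
  simp [totDominatedBy]

theorem neighborSet_subset_totDominatedBy {v : V} {h : List V} (hv : v ∈ h) :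
    G.neighborSet v ⊆ totDominatedBy G h :=
  Set.subset_biUnion_of_mem (u := fun u ↦ G.neighborSet u) hv

variable {G A}

theorem neighborSet_subset_union_totDominatedBy_cons (v : V) (h : List V) :
    G.neighborSet v ⊆ A ∪ totDominatedBy G (v :: h) := by
  rw [totDominatedBy_cons]
  exact Set.subset_union_left.trans Set.subset_union_right

theorem llLegal.compl_nonempty {h : List V} {v : V} (hv : llLegal G A h v) :
    (A ∪ totDominatedBy G h)ᶜ.Nonempty :=
  hv.imp fun _ hx ↦ hx.2

theorem llLegal.of_subset {h h' : List V} {v : V}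
    (hsub : A ∪ totDominatedBy G h ⊆ A ∪ totDominatedBy G h') (hv : llLegal G A h' v) :
    llLegal G A h v :=
  hv.mono <| Set.sdiff_subset_sdiff_right hsub

theorem neighborSet_subset_of_not_lLegal {h : List V} {v : V} (hv : ¬ lLegal G A h v) :
    G.neighborSet v ⊆ A ∪ totDominatedBy G h := by
  by_cases hvh : v ∈ h
  · exact (neighborSet_subset_totDominatedBy G hvh).trans Set.subset_union_right
  · have hnot : ¬ llLegal G A h v := fun hll ↦ hv ⟨hll, hvh⟩
    rw [llLegal, Set.not_nonempty_iff_eq_empty, Set.sdiff_eq_empty] at hnot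
    exact (Set.subset_insert _ _).trans hnot

theorem union_totDominatedBy_cons_subset {h h' : List V} {u v : V}
    (hsub : A ∪ totDominatedBy G h ⊆ A ∪ totDominatedBy G h')
    (hv : G.neighborSet v ⊆ A ∪ totDominatedBy G (u :: h')) :
    A ∪ totDominatedBy G (v :: h) ⊆ A ∪ totDominatedBy G (u :: h') := by
  have hmono : A ∪ totDominatedBy G h' ⊆ A ∪ totDominatedBy G (u :: h') := by
    rw [totDominatedBy_cons]
    exact Set.union_subset_union_right _ Set.subset_union_right
  rw [totDominatedBy_cons, Set.union_left_comm]
  exact Set.union_subset hv (hsub.trans hmono)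

theorem canEnd_lLegal_of_canEnd_llLegal :
    ∀ {k : ℕ} {turn : Bool} {h h' : List V},
      A ∪ totDominatedBy G h ⊆ A ∪ totDominatedBy G h' →
      canEnd (llLegal G A) k turn h → canEnd (lLegal G A) k turn h'
  | 0, _, _, _, hsub, hend => fun v hv ↦ hend v (hv.1.of_subset hsub)
  | k + 1, false, h, h', hsub, hend => fun v hv ↦
      canEnd_lLegal_of_canEnd_llLegal
        (union_totDominatedBy_cons_subset hsub (neighborSet_subset_union_totDominatedBy_cons v h'))
        (hend v (hv.1.of_subset hsub))
  | k + 1, true, h, h', hsub, hend => by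
      rcases hend with hover | ⟨v, hv, hend⟩
      · exact Or.inl fun u hu ↦ hover u (hu.1.of_subset hsub)
      by_cases hv' : lLegal G A h' v
      · exact Or.inr ⟨v, hv', canEnd_lLegal_of_canEnd_llLegal (union_totDominatedBy_cons_subset
          hsub (neighborSet_subset_union_totDominatedBy_cons v h')) hend⟩
      by_cases hover : ∃ u, lLegal G A h' u
      · obtain ⟨u, hu⟩ := hover
        have hNv : G.neighborSet v ⊆ A ∪ totDominatedBy G (u :: h') := by
          rw [totDominatedBy_cons, Set.union_left_comm]
          exact (neighborSet_subset_of_not_lLegal hv').trans Set.subset_union_right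
        exact Or.inr ⟨u, hu, canEnd_lLegal_of_canEnd_llLegal
          (union_totDominatedBy_cons_subset hsub hNv) hend⟩
      · exact Or.inl fun u hu ↦ hover ⟨u, hu⟩

theorem compl_union_totDominatedBy_cons_subset {h : List V} {u w : V}
    (hw : G.Adj u w) (v : V) :
    (A ∪ totDominatedBy G (v :: u :: h))ᶜ ⊆ (A ∪ totDominatedBy G h)ᶜ \ {w} := by
  intro x hx
  simp only [totDominatedBy_cons, Set.mem_compl_iff, Set.mem_union, not_or] at hx
  exact ⟨by simp [hx.1, hx.2.2.2], by rintro rfl; exact hx.2.2.1 hw⟩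

theorem canEnd_llLegal_of_ncard_le [Finite V] (hG : isolateFree G) :
    ∀ (m : ℕ) (h : List V), (A ∪ totDominatedBy G h)ᶜ.ncard ≤ m →
      canEnd (llLegal G A) (2 * m) true h := by
  intro m
  induction m with
  | zero =>
    intro h hm v hv
    exact hv.compl_nonempty.ne_empty ((Set.ncard_eq_zero).1 (Nat.le_zero.mp hm))
  | succ m ih =>
    intro h hm
    rcases (A ∪ totDominatedBy G h)ᶜ.eq_empty_or_nonempty with hall | ⟨w, hw⟩
    · exact Or.inl fun v hv ↦ hv.compl_nonempty.ne_empty hall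
    obtain ⟨u, huw⟩ := hG w
    have hu : llLegal G A h u := ⟨w, Set.mem_insert_of_mem _ huw.symm, hw⟩
    refine Or.inr ⟨u, hu, fun v _ ↦ ih _ ?_⟩
    have hlt := (Set.ncard_le_ncard (compl_union_totDominatedBy_cons_subset huw.symm v)).trans_lt
      (Set.ncard_sdiff_singleton_lt_of_mem hw)
    omega

theorem exists_canEnd_llLegal [Finite V] (hG : isolateFree G) :
    ∃ k, canEnd (llLegal G A) k true [] :=
  ⟨_, canEnd_llLegal_of_ncard_le hG _ _ le_rfl⟩

end

theorem gameVal_le_gameVal {V : Type*} {legal legal' : List V → V → Prop} {first : Bool}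
    (hfin : ∃ k, canEnd legal k first [])
    (hle : ∀ k, canEnd legal k first [] → canEnd legal' k first []) :
    gameVal legal' first ≤ gameVal legal first :=
  Nat.sInf_le (hle _ (Nat.sInf_mem hfin))

theorem gammaLgA_le_gammaLLgA {V : Type*} [Finite V] {G : SimpleGraph V} (hG : isolateFree G)
    (A : Set V) : gammaLgA G A ≤ gammaLLgA G A :=
  gameVal_le_gameVal (exists_canEnd_llLegal hG) fun _ ↦
    canEnd_lLegal_of_canEnd_llLegal subset_rfl

/-- The game L-domination number is at most the game LL-domination number. -/
theorem gammaLg_le_gammaLLg {V : Type*} [Fintype V] (G : SimpleGraph V)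
    (hG : isolateFree G) :
    gammaLg G ≤ gammaLLg G :=
  gammaLgA_le_gammaLLgA hG ∅
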